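/- Let D = (V, A) be the directed graph of a finite simple graph G = (V,E). Let s : V × V → ℝ_{>0} be symmetric (s(v,w) = s(w,v)) and let t_B > 0 be given for every proper nonempty subset B ⊊ V. Define, for each arc (v→w) ∈ A, P_{v→w} = s(v,w) · Π_{B : v∈B, w∉B} t_B · Π_{B : w∈B, v∉B} t_B^{-1}, and define κ(v) = Π_{B : v∈B} t_B^{-2}. Then the detailed balance equations κ(v) P_{v→w} = κ(w) P_{w→v} hold for every arc (v→w) ∈ A. -/

import Mathlib

open Finset

/-!
Split the sets containing `v` into those that also contain `w` and those that separate `v`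
from `w`. Against the latter, `κ(v)` contributes `t_B⁻²` while `P_{v→w}` contributes `t_B`, so
`κ(v) P_{v→w} = s(v,w) Π_{v,w ∈ B} t_B⁻² Π_{B separates v,w} t_B⁻¹`, which is symmetric in `v`
and `w`.
-/

namespace DetailedBalance

variable {ι K : Type*} [CommGroupWithZero K] (S : Finset ι) (f : ι → K) (p q : ι → Prop)
  [DecidablePred p] [DecidablePred q]

theorem prod_filter_zpow_neg_two_mul_div_eq (hf : ∀ x ∈ S, f x ≠ 0) :
    (∏ x ∈ S with p x, f x ^ (-2 : ℤ)) *
        ((∏ x ∈ S with p x ∧ ¬q x, f x) * (∏ x ∈ S with q x ∧ ¬p x, f x)⁻¹) =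
      (∏ x ∈ S with p x ∧ q x, f x ^ (-2 : ℤ)) *
        ((∏ x ∈ S with p x ∧ ¬q x, f x) * (∏ x ∈ S with q x ∧ ¬p x, f x))⁻¹ := by
  have hsplit := prod_filter_mul_prod_filter_not (S.filter p) q (fun x => f x ^ (-2 : ℤ))
  simp only [filter_filter] at hsplit
  have hsep : ∏ x ∈ S with p x ∧ ¬q x, f x ≠ 0 :=
    prod_ne_zero_iff.2 fun x hx => hf x (mem_filter.1 hx).1
  rw [← hsplit, prod_zpow, prod_zpow]
  field_simp

end DetailedBalance

open DetailedBalance in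
theorem stmt_14 {V : Type*} [Fintype V] [DecidableEq V]
    (G : SimpleGraph V)
    (s : V → V → ℝ) (hssym : ∀ v w, s v w = s w v)
    (t : Finset V → ℝ) (ht : ∀ B, 0 < t B)
    (P : V → V → ℝ)
    (hP : ∀ v w, G.Adj v w → P v w =
      s v w * (∏ B ∈ univ.filter
          (fun B : Finset V => B.Nonempty ∧ B ≠ Finset.univ ∧ v ∈ B ∧ w ∉ B), t B)
        * (∏ B ∈ univ.filter
          (fun B : Finset V => B.Nonempty ∧ B ≠ Finset.univ ∧ w ∈ B ∧ v ∉ B), t B)⁻¹)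
    (κ : V → ℝ)
    (hκ : ∀ v, κ v = ∏ B ∈ univ.filter
        (fun B : Finset V => B.Nonempty ∧ B ≠ Finset.univ ∧ v ∈ B), (t B) ^ (-2 : ℤ)) :
    ∀ v w, G.Adj v w → κ v * P v w = κ w * P w v := by
  intro v w hadj
  set S := univ.filter fun B : Finset V => B.Nonempty ∧ B ≠ univ
  have hproper (R : Finset V → Prop) [DecidablePred R] :
      univ.filter (fun B : Finset V => B.Nonempty ∧ B ≠ univ ∧ R B) = S.filter R := by
    simp only [S, filter_filter, and_assoc]
  have ht0 : ∀ B ∈ S, t B ≠ 0 := fun B _ => (ht B).ne'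
  have hv := prod_filter_zpow_neg_two_mul_div_eq S t (v ∈ ·) (w ∈ ·) ht0
  have hw := prod_filter_zpow_neg_two_mul_div_eq S t (w ∈ ·) (v ∈ ·) ht0
  have hboth : S.filter (fun B => w ∈ B ∧ v ∈ B) = S.filter (fun B => v ∈ B ∧ w ∈ B) :=
    filter_congr fun _ _ => and_comm
  rw [hboth] at hw
  rw [hκ, hκ, hP v w hadj, hP w v hadj.symm, hssym v w]
  simp only [hproper]
  linear_combination s w v * (hv - hw)
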